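/- If f: Dⁿ → ℝ is α-bisubmodular and x ∈ [-α,1]ⁿ, then any probability distribution μ with marginal x minimizing Σ_a λ(a)f(a) over distributions λ with marginal x and, among such minimizers, maximizing Σ_a λ(a)z(a)², must have support forming a chain in Dⁿ, hence equals the unique chain-supported distribution λ_x. -/

import Mathlib

open Finset

/-- The three-element domain `D = {-α, 0, 1}`, abstractly. -/
inductive D3 : Type
  | neg : D3
  | zero : D3
  | one : D3
deriving DecidableEq

instance : Fintype D3 :=
  ⟨{D3.neg, D3.zero, D3.one}, by rintro (_ | _ | _) <;> simp⟩

namespace D3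

/-- The embedding of `D3` into `ℝ` sending `neg ↦ -α`, `zero ↦ 0`, `one ↦ 1`. -/
def emb (α : ℝ) : D3 → ℝ
  | neg => -α
  | zero => 0
  | one => 1

/-- The partial order `0 ≺ 1`, `0 ≺ -α`, with `1` and `-α` incomparable. -/
instance : PartialOrder D3 where
  le x y := x = y ∨ x = zero
  le_refl x := Or.inl rfl
  le_trans x y z hxy hyz := by
    rcases hxy with rfl | rfl
    · exact hyz
    · exact Or.inr rfl
  le_antisymm x y hxy hyx := by
    rcases hxy with rfl | rfl
    · rfl
    · rcases hyx with rfl | rfl <;> rfl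

/-- `∧₀` : `1 ∧₀ (-α) = (-α) ∧₀ 1 = 0`, and min w.r.t. `≺` otherwise. -/
def meet0 (x y : D3) : D3 := if x = y then x else zero

/-- `∨₀` : `1 ∨₀ (-α) = (-α) ∨₀ 1 = 0`, and max w.r.t. `≺` otherwise. -/
def join0 (x y : D3) : D3 :=
  if x = y then x else if x = zero then y else if y = zero then x else zero

/-- `∨₁` : `1 ∨₁ (-α) = (-α) ∨₁ 1 = 1`, and max w.r.t. `≺` otherwise. -/
def join1 (x y : D3) : D3 :=
  if x = y then x else if x = zero then y else if y = zero then x else one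

end D3

/-- Componentwise `∧₀` on `Dⁿ`. -/
def vmeet0 {n : ℕ} (a b : Fin n → D3) : Fin n → D3 := fun i => D3.meet0 (a i) (b i)

/-- Componentwise `∨₀` on `Dⁿ`. -/
def vjoin0 {n : ℕ} (a b : Fin n → D3) : Fin n → D3 := fun i => D3.join0 (a i) (b i)

/-- Componentwise `∨₁` on `Dⁿ`. -/
def vjoin1 {n : ℕ} (a b : Fin n → D3) : Fin n → D3 := fun i => D3.join1 (a i) (b i)

/-- `lam` is a probability distribution on `Dⁿ`. -/
def IsDist (n : ℕ) (lam : (Fin n → D3) → ℝ) : Prop :=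
  (∀ a, 0 ≤ lam a ∧ lam a ≤ 1) ∧ ∑ a : Fin n → D3, lam a = 1

/-- `lam` has marginal vector `x`, i.e. `Σ_a lam(a)·a = x` in `ℝⁿ`. -/
def HasMarginal (α : ℝ) (n : ℕ) (lam : (Fin n → D3) → ℝ) (x : Fin n → ℝ) : Prop :=
  ∀ i, ∑ a : Fin n → D3, lam a * D3.emb α (a i) = x i

/-- The support of `lam` forms a chain w.r.t. the componentwise order on `Dⁿ`. -/
def ChainSupp (n : ℕ) (lam : (Fin n → D3) → ℝ) : Prop :=
  ∀ a b : Fin n → D3, lam a ≠ 0 → lam b ≠ 0 → a ≤ b ∨ b ≤ a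

/-- The box `[-α,1]ⁿ`. -/
def Box (α : ℝ) (n : ℕ) : Set (Fin n → ℝ) := {x | ∀ i, x i ∈ Set.Icc (-α) 1}

/-- `f : Dⁿ → ℝ` is α-bisubmodular. -/
def AlphaBisub (α : ℝ) (n : ℕ) (f : (Fin n → D3) → ℝ) : Prop :=
  ∀ a b : Fin n → D3,
    f (vmeet0 a b) + α * f (vjoin0 a b) + (1 - α) * f (vjoin1 a b) ≤ f a + f b

/-- Number of zero coordinates. -/
def zc {n : ℕ} (c : Fin n → D3) : ℕ := (Finset.univ.filter fun i => c i = D3.zero).card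

/-- The convex closure `f⁻(x)`. -/
noncomputable def cClos (α : ℝ) (n : ℕ) (f : (Fin n → D3) → ℝ) (x : Fin n → ℝ) : ℝ :=
  sInf {y | ∃ lam, IsDist n lam ∧ HasMarginal α n lam x ∧ y = ∑ a : Fin n → D3, lam a * f a}

/-!
If two incomparable points `a, b` both carry mass under `μ`, moving mass `ε` away from each of
them onto `a ∧₀ b`, `a ∨₀ b` (weight `α`) and `a ∨₁ b` (weight `1 - α`) keeps the marginal
(coordinatewise `a ∧₀ b + α (a ∨₀ b) + (1 - α)(a ∨₁ b) = a + b` in `ℝ`), does not increase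
`Σ λ f` by α-bisubmodularity, and strictly increases `Σ λ z²`. So the secondary optimizer is
chain-supported.

A chain-supported distribution is determined by its marginal: in coordinate `i` it cannot charge
both `1` and `-α`, so the masses there are `max (x i) 0` and `max (-x i / α) 0`; the mass of the
up-set of `a` is the least of these masses over the nonzero coordinates of `a`; and up-set masses
determine a function on a finite poset by Möbius inversion.
-/

theorem sum_add_smul_mul {ι : Type*} [Fintype ι] (μ e h : ι → ℝ) (ε : ℝ) :
    ∑ c, (μ + ε • e) c * h c = ∑ c, μ c * h c + ε * ∑ c, e c * h c := by
  simp only [Pi.add_apply, Pi.smul_apply, smul_eq_mul, add_mul, sum_add_distrib, mul_sum,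
    mul_assoc]

theorem eq_of_sum_filter_le_eq {β M : Type*} [PartialOrder β] [Fintype β] [DecidableLE β]
    [AddCancelCommMonoid M] {μ ν : β → M}
    (h : ∀ a, ∑ b ∈ univ.filter (a ≤ ·), μ b = ∑ b ∈ univ.filter (a ≤ ·), ν b) : μ = ν := by
  classical
  funext a
  induction a using WellFoundedGT.induction with
  | _ a ih =>
    have ha : a ∈ univ.filter (a ≤ ·) := by simp
    have hrest : ∑ b ∈ (univ.filter (a ≤ ·)).erase a, μ b
        = ∑ b ∈ (univ.filter (a ≤ ·)).erase a, ν b := by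
      refine sum_congr rfl fun b hb => ?_
      rw [mem_erase, mem_filter] at hb
      exact ih b (lt_of_le_of_ne hb.2.2 (Ne.symm hb.1))
    have := h a
    rw [← add_sum_erase _ μ ha, ← add_sum_erase _ ν ha, hrest] at this
    exact add_right_cancel this

theorem eq_max_of_sub_mul_eq {α P N y : ℝ} (hα : 0 < α) (hP : 0 ≤ P) (hN : 0 ≤ N)
    (hPN : P = 0 ∨ N = 0) (h : P - α * N = y) : P = max y 0 ∧ N = max (-y / α) 0 := by
  subst h
  rcases hPN with rfl | rfl
  · have hαN : 0 ≤ α * N := mul_nonneg hα.le hN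
    rw [max_eq_right (by linarith), zero_sub, neg_neg, mul_div_cancel_left₀ N hα.ne',
      max_eq_left hN]
    exact ⟨rfl, rfl⟩
  · rw [mul_zero, sub_zero, max_eq_left hP,
      max_eq_right (div_nonpos_of_nonpos_of_nonneg (neg_nonpos.2 hP) hα.le)]
    exact ⟨rfl, rfl⟩

namespace D3

instance : DecidableLE D3 := fun u v => inferInstanceAs (Decidable (u = v ∨ u = zero))

theorem le_iff {u v : D3} : u ≤ v ↔ u = v ∨ u = zero := Iff.rfl

theorem emb_meet0_add_join0_add_join1 (α : ℝ) (u v : D3) :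
    emb α (meet0 u v) + α * emb α (join0 u v) + (1 - α) * emb α (join1 u v)
      = emb α u + emb α v := by
  cases u <;> cases v <;> simp [meet0, join0, join1, emb] <;> ring

end D3

instance {n : ℕ} : DecidableLE (Fin n → D3) := fun _ _ => decidable_of_iff _ Pi.le_def.symm

section Exchange

variable {n : ℕ}

theorem isDist_of_nonneg {lam : (Fin n → D3) → ℝ} (h0 : ∀ a, 0 ≤ lam a)
    (h1 : ∑ a, lam a = 1) : IsDist n lam :=
  ⟨fun a => ⟨h0 a, h1 ▸ single_le_sum (fun b _ => h0 b) (mem_univ a)⟩, h1⟩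

noncomputable def exchange (α : ℝ) (a b : Fin n → D3) : (Fin n → D3) → ℝ :=
  Pi.single (vmeet0 a b) 1 + α • Pi.single (vjoin0 a b) 1 + (1 - α) • Pi.single (vjoin1 a b) 1
    - Pi.single a 1 - Pi.single b 1

theorem sum_exchange_mul (α : ℝ) (a b : Fin n → D3) (h : (Fin n → D3) → ℝ) :
    ∑ c, exchange α a b c * h c
      = h (vmeet0 a b) + α * h (vjoin0 a b) + (1 - α) * h (vjoin1 a b) - h a - h b := by
  simp [exchange, sub_mul, add_mul, sum_add_distrib, sum_sub_distrib, Pi.single_apply]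

theorem sum_exchange (α : ℝ) (a b : Fin n → D3) : ∑ c, exchange α a b c = 0 := by
  have h := sum_exchange_mul α a b 1
  simp only [Pi.one_apply, mul_one] at h
  rw [h]
  ring

theorem add_smul_exchange_nonneg {α ε : ℝ} (hα0 : 0 ≤ α) (hα1 : α ≤ 1)
    {μ : (Fin n → D3) → ℝ} (hμ : ∀ c, 0 ≤ μ c) {a b : Fin n → D3} (hab : a ≠ b)
    (hε0 : 0 ≤ ε) (hεa : ε ≤ μ a) (hεb : ε ≤ μ b) (c : Fin n → D3) :
    0 ≤ (μ + ε • exchange α a b) c := by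
  have hgain : 0 ≤ (Pi.single (vmeet0 a b) 1 + α • Pi.single (vjoin0 a b) 1
      + (1 - α) • Pi.single (vjoin1 a b) 1 : (Fin n → D3) → ℝ) c := by
    simp only [Pi.add_apply, Pi.smul_apply, smul_eq_mul, Pi.single_apply]
    have := sub_nonneg.2 hα1
    positivity
  simp only [exchange, Pi.add_apply, Pi.smul_apply, Pi.sub_apply, smul_eq_mul] at hgain ⊢
  rcases eq_or_ne c a with rfl | hca
  · simp only [Pi.single_eq_same, Pi.single_eq_of_ne hab]
    nlinarith
  rcases eq_or_ne c b with rfl | hcb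
  · simp only [Pi.single_eq_same, Pi.single_eq_of_ne hca]
    nlinarith
  simp only [Pi.single_eq_of_ne hca, Pi.single_eq_of_ne hcb]
  nlinarith [hμ c]

end Exchange

section ZeroCounts

open D3

variable {n : ℕ} (a b : Fin n → D3)

def numBothZero : ℕ := (univ.filter fun i => a i = zero ∧ b i = zero).card

def numZeroNonzero : ℕ := (univ.filter fun i => a i = zero ∧ b i ≠ zero).card

def numNonzeroDistinct : ℕ := (univ.filter fun i => a i ≠ zero ∧ b i ≠ zero ∧ a i ≠ b i).card

theorem zc_vmeet0 : zc (vmeet0 a b)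
    = numBothZero a b + numZeroNonzero a b + numZeroNonzero b a + numNonzeroDistinct a b := by
  unfold zc vmeet0 numBothZero numZeroNonzero numNonzeroDistinct
  simp only [card_filter, ← sum_add_distrib]
  refine sum_congr rfl fun i _ => ?_
  rcases a i <;> rcases b i <;> simp [meet0]

theorem zc_vjoin0 : zc (vjoin0 a b) = numBothZero a b + numNonzeroDistinct a b := by
  unfold zc vjoin0 numBothZero numNonzeroDistinct
  simp only [card_filter, ← sum_add_distrib]
  refine sum_congr rfl fun i _ => ?_
  rcases a i <;> rcases b i <;> simp [join0]

theorem zc_vjoin1 : zc (vjoin1 a b) = numBothZero a b := by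
  unfold zc vjoin1 numBothZero
  simp only [card_filter]
  refine sum_congr rfl fun i _ => ?_
  rcases a i <;> rcases b i <;> simp [join1]

theorem zc_left : zc a = numBothZero a b + numZeroNonzero a b := by
  simp only [zc, numBothZero, numZeroNonzero, card_filter, ← sum_add_distrib]
  refine sum_congr rfl fun i _ => ?_
  rcases a i <;> rcases b i <;> simp

theorem zc_right : zc b = numBothZero a b + numZeroNonzero b a := by
  simp only [zc, numBothZero, numZeroNonzero, card_filter, ← sum_add_distrib]
  refine sum_congr rfl fun i _ => ?_
  rcases a i <;> rcases b i <;> simp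

theorem numNonzeroDistinct_comm : numNonzeroDistinct b a = numNonzeroDistinct a b := by
  simp only [numNonzeroDistinct, ne_comm (a := b _)]
  congr 1
  ext i
  simp only [mem_filter]
  tauto

variable {a b}

theorem numZeroNonzero_add_numNonzeroDistinct_pos (h : ¬ a ≤ b) :
    0 < numZeroNonzero b a + numNonzeroDistinct a b := by
  obtain ⟨i, hi⟩ := not_forall.1 (mt Pi.le_def.2 h)
  rw [le_iff, not_or] at hi
  by_cases hb : b i = zero
  · have : 0 < numZeroNonzero b a := card_pos.2 ⟨i, by simp [hb, hi.2]⟩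
    omega
  · have : 0 < numNonzeroDistinct a b := card_pos.2 ⟨i, by simp [hb, hi.1, hi.2]⟩
    omega

theorem zc_sq_add_zc_sq_lt {α : ℝ} (hα0 : 0 ≤ α) (hab : ¬ a ≤ b) (hba : ¬ b ≤ a) :
    (zc a : ℝ) ^ 2 + (zc b : ℝ) ^ 2
      < (zc (vmeet0 a b) : ℝ) ^ 2 + α * (zc (vjoin0 a b) : ℝ) ^ 2
        + (1 - α) * (zc (vjoin1 a b) : ℝ) ^ 2 := by
  have hu := numZeroNonzero_add_numNonzeroDistinct_pos hab
  have hv := numZeroNonzero_add_numNonzeroDistinct_pos hba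
  rw [numNonzeroDistinct_comm] at hv
  rw [zc_vmeet0, zc_vjoin0, zc_vjoin1, zc_left a b, zc_right a b]
  set p := numBothZero a b
  set qa := numZeroNonzero a b
  set qb := numZeroNonzero b a
  set t := numNonzeroDistinct a b
  have huv : (1 : ℝ) ≤ ((qa + t) * (qb + t) : ℕ) := by exact_mod_cast Nat.mul_pos hv hu
  push_cast at huv ⊢
  -- the gain is `2 (qa + t)(qb + t) + 2 (1 + α) p t - (1 - α) t²`
  nlinarith [mul_nonneg (Nat.cast_nonneg (α := ℝ) p) (Nat.cast_nonneg (α := ℝ) t),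
    mul_nonneg (Nat.cast_nonneg (α := ℝ) qa) (Nat.cast_nonneg (α := ℝ) qb),
    mul_nonneg (Nat.cast_nonneg (α := ℝ) qa) (Nat.cast_nonneg (α := ℝ) t),
    mul_nonneg (Nat.cast_nonneg (α := ℝ) qb) (Nat.cast_nonneg (α := ℝ) t),
    mul_nonneg hα0 (mul_nonneg (Nat.cast_nonneg (α := ℝ) p) (Nat.cast_nonneg (α := ℝ) t)),
    mul_nonneg hα0 (sq_nonneg (t : ℝ))]

end ZeroCounts

section Improvement

variable {α : ℝ} {n : ℕ} {μ : (Fin n → D3) → ℝ} {x : Fin n → ℝ}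

theorem hasMarginal_add_smul_exchange (hμ : HasMarginal α n μ x) (ε : ℝ) (a b : Fin n → D3) :
    HasMarginal α n (μ + ε • exchange α a b) x := by
  intro i
  rw [sum_add_smul_mul, sum_exchange_mul, hμ i]
  simp only [vmeet0, vjoin0, vjoin1, D3.emb_meet0_add_join0_add_join1]
  ring

theorem exists_better_of_not_le_of_not_le (hα0 : 0 ≤ α) (hα1 : α ≤ 1)
    {f : (Fin n → D3) → ℝ} (hf : AlphaBisub α n f) (hd : IsDist n μ) (hm : HasMarginal α n μ x)
    {a b : Fin n → D3} (ha : μ a ≠ 0) (hb : μ b ≠ 0) (hab : ¬ a ≤ b) (hba : ¬ b ≤ a) :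
    ∃ ν, IsDist n ν ∧ HasMarginal α n ν x ∧ ∑ c, ν c * f c ≤ ∑ c, μ c * f c ∧
      ∑ c, μ c * (zc c : ℝ) ^ 2 < ∑ c, ν c * (zc c : ℝ) ^ 2 := by
  have hμ : ∀ c, 0 ≤ μ c := fun c => (hd.1 c).1
  set ε := min (μ a) (μ b)
  have hε : 0 < ε := lt_min ((hμ a).lt_of_ne' ha) ((hμ b).lt_of_ne' hb)
  have hne : a ≠ b := by rintro rfl; exact hab le_rfl
  have hsum : ∑ c, (μ + ε • exchange α a b) c = 1 := by
    simpa [hd.2, sum_exchange] using sum_add_smul_mul μ (exchange α a b) 1 ε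
  refine ⟨μ + ε • exchange α a b, isDist_of_nonneg (add_smul_exchange_nonneg hα0 hα1 hμ hne
    hε.le (min_le_left _ _) (min_le_right _ _)) hsum, hasMarginal_add_smul_exchange hm ε a b,
    ?_, ?_⟩
  · rw [sum_add_smul_mul, sum_exchange_mul]
    nlinarith [hf a b]
  · rw [sum_add_smul_mul, sum_exchange_mul]
    nlinarith [zc_sq_add_zc_sq_lt hα0 hab hba]

end Improvement
section ChainSupported

open D3

variable {α : ℝ} {n : ℕ} {μ ν : (Fin n → D3) → ℝ} {x : Fin n → ℝ}

def fiberMass (μ : (Fin n → D3) → ℝ) (i : Fin n) (u : D3) : ℝ :=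
  ∑ b ∈ univ.filter (fun b => b i = u), μ b

theorem sum_mul_emb_eq_fiberMass (α : ℝ) (μ : (Fin n → D3) → ℝ) (i : Fin n) :
    ∑ a, μ a * emb α (a i) = fiberMass μ i one - α * fiberMass μ i neg := by
  rw [fiberMass, fiberMass, sum_filter, sum_filter, mul_sum, ← sum_sub_distrib]
  refine sum_congr rfl fun a _ => ?_
  rcases a i <;> simp [emb, mul_comm]

theorem ChainSupp.fiberMass_one_eq_zero_or (hc : ChainSupp n μ) (i : Fin n) :
    fiberMass μ i one = 0 ∨ fiberMass μ i neg = 0 := by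
  by_contra! h
  obtain ⟨a, ha, ha0⟩ := exists_ne_zero_of_sum_ne_zero h.1
  obtain ⟨b, hb, hb0⟩ := exists_ne_zero_of_sum_ne_zero h.2
  rw [mem_filter] at ha hb
  rcases hc a b ha0 hb0 with h | h
  · simpa [le_iff, ha.2, hb.2] using h i
  · simpa [le_iff, ha.2, hb.2] using h i

theorem ChainSupp.fiberMass_eq_max (hα : 0 < α) (hd : IsDist n μ) (hm : HasMarginal α n μ x)
    (hc : ChainSupp n μ) (i : Fin n) :
    fiberMass μ i one = max (x i) 0 ∧ fiberMass μ i neg = max (-x i / α) 0 :=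
  eq_max_of_sub_mul_eq hα (sum_nonneg fun b _ => (hd.1 b).1) (sum_nonneg fun b _ => (hd.1 b).1)
    (hc.fiberMass_one_eq_zero_or i) ((sum_mul_emb_eq_fiberMass α μ i).symm.trans (hm i))

-- In the support, the fibres `{b | b i = a i}` with `a i ≠ zero` are up-closed subsets of a
-- chain, hence nested.
theorem ChainSupp.fiber_nested (hc : ChainSupp n μ) {a : Fin n → D3} {i j : Fin n}
    (hi : a i ≠ zero) (hj : a j ≠ zero) :
    (∀ b, μ b ≠ 0 → b i = a i → b j = a j) ∨ (∀ b, μ b ≠ 0 → b j = a j → b i = a i) := by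
  by_contra! h
  obtain ⟨⟨b, hb0, hbi, hbj⟩, ⟨c, hc0, hcj, hci⟩⟩ := h
  rcases hc b c hb0 hc0 with h | h
  · rcases le_iff.1 (h i) with h' | h'
    · exact hci (h' ▸ hbi)
    · exact hi (hbi ▸ h')
  · rcases le_iff.1 (h j) with h' | h'
    · exact hbj (h' ▸ hcj)
    · exact hj (hcj ▸ h')

theorem ChainSupp.exists_fiber_subset_upset (hc : ChainSupp n μ) {a : Fin n → D3}
    (hS : (univ.filter fun i => a i ≠ zero).Nonempty) :
    ∃ i₀ ∈ univ.filter (fun i => a i ≠ zero), ∀ b, μ b ≠ 0 → b i₀ = a i₀ → a ≤ b := by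
  let supp (i : Fin n) := univ.filter fun b => b i = a i ∧ μ b ≠ 0
  -- the fibres in the support are nested, so one of least cardinality lies in all the others
  obtain ⟨i₀, hi₀, hmin⟩ := exists_min_image _ (fun i => (supp i).card) hS
  refine ⟨i₀, hi₀, fun b hb0 hb j => ?_⟩
  by_cases hj : a j = zero
  · exact Or.inr hj
  have hjS : j ∈ univ.filter (fun i => a i ≠ zero) := by simpa using hj
  refine Or.inl ((hc.fiber_nested (mem_filter.1 hi₀).2 hj).elim (fun h => (h b hb0 hb).symm)
    fun h => ?_)
  have hsub : supp j ⊆ supp i₀ := fun c hc' => by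
    simp only [supp, mem_filter, mem_univ, true_and] at hc' ⊢
    exact ⟨h c hc'.2 hc'.1, hc'.2⟩
  have hb' : b ∈ supp j := by
    rw [eq_of_subset_of_card_le hsub (hmin j hjS)]
    simp [supp, hb, hb0]
  exact (mem_filter.1 hb').2.1.symm

theorem ChainSupp.sum_filter_le_eq_inf' (hμ : ∀ b, 0 ≤ μ b) (hc : ChainSupp n μ)
    (a : Fin n → D3) (hS : (univ.filter fun i => a i ≠ zero).Nonempty) :
    ∑ b ∈ univ.filter (a ≤ ·), μ b
      = (univ.filter fun i => a i ≠ zero).inf' hS fun i => fiberMass μ i (a i) := by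
  have hsub : ∀ i, a i ≠ zero → univ.filter (a ≤ ·) ⊆ univ.filter fun b => b i = a i :=
    fun i hi b hb => by
      rw [mem_filter] at hb ⊢
      exact ⟨mem_univ b, (le_iff.1 (hb.2 i)).resolve_right hi |>.symm⟩
  refine le_antisymm (le_inf' _ _ fun i hi =>
    sum_le_sum_of_subset_of_nonneg (hsub i (mem_filter.1 hi).2) fun b _ _ => hμ b) ?_
  obtain ⟨i₀, hi₀, hfib⟩ := hc.exists_fiber_subset_upset hS
  calc (univ.filter fun i => a i ≠ zero).inf' hS (fun i => fiberMass μ i (a i))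
      ≤ fiberMass μ i₀ (a i₀) := inf'_le _ hi₀
    _ = ∑ b ∈ (univ.filter fun b => b i₀ = a i₀).filter (μ · ≠ 0), μ b :=
        (sum_filter_ne_zero _).symm
    _ ≤ ∑ b ∈ univ.filter (a ≤ ·), μ b := by
        refine sum_le_sum_of_subset_of_nonneg (fun b hb => ?_) fun b _ _ => hμ b
        simp only [mem_filter, mem_univ, true_and] at hb ⊢
        exact hfib b hb.2 hb.1

theorem ChainSupp.eq (hα : 0 < α) (hdμ : IsDist n μ) (hmμ : HasMarginal α n μ x)
    (hcμ : ChainSupp n μ) (hdν : IsDist n ν) (hmν : HasMarginal α n ν x) (hcν : ChainSupp n ν) :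
    μ = ν := by
  refine eq_of_sum_filter_le_eq fun a => ?_
  by_cases hS : (univ.filter fun i => a i ≠ zero).Nonempty
  · rw [hcμ.sum_filter_le_eq_inf' (fun b => (hdμ.1 b).1) a hS,
      hcν.sum_filter_le_eq_inf' (fun b => (hdν.1 b).1) a hS]
    refine inf'_congr hS rfl fun i hi => ?_
    have hμi := hcμ.fiberMass_eq_max hα hdμ hmμ i
    have hνi := hcν.fiberMass_eq_max hα hdν hmν i
    rcases hai : a i
    · rw [hμi.2, hνi.2]
    · simp [hai] at hi
    · rw [hμi.1, hνi.1]
  · have hall : ∀ b, a ≤ b := fun b i => Or.inr (by simpa using not_exists.1 hS i)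
    simp [hall, hdμ.2, hdν.2]

end ChainSupported

theorem stmt15_general (α : ℝ) (hα : α ∈ Set.Ioc (0 : ℝ) 1) (n : ℕ) (f : (Fin n → D3) → ℝ)
    (hf : AlphaBisub α n f) (x : Fin n → ℝ)
    (mu : (Fin n → D3) → ℝ)
    (h1 : IsDist n mu) (h2 : HasMarginal α n mu x)
    (hmin : ∀ lam : (Fin n → D3) → ℝ, IsDist n lam → HasMarginal α n lam x →
      ∑ a : Fin n → D3, mu a * f a ≤ ∑ a : Fin n → D3, lam a * f a)
    (hmax : ∀ lam : (Fin n → D3) → ℝ, IsDist n lam → HasMarginal α n lam x →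
      (∀ lam' : (Fin n → D3) → ℝ, IsDist n lam' → HasMarginal α n lam' x →
        ∑ a : Fin n → D3, lam a * f a ≤ ∑ a : Fin n → D3, lam' a * f a) →
      ∑ a : Fin n → D3, lam a * (zc a : ℝ) ^ 2 ≤ ∑ a : Fin n → D3, mu a * (zc a : ℝ) ^ 2) :
    ChainSupp n mu ∧
    ∀ lam : (Fin n → D3) → ℝ, IsDist n lam → HasMarginal α n lam x → ChainSupp n lam →
      mu = lam := by
  have hchain : ChainSupp n mu := by
    intro a b ha hb
    by_contra! hcomp
    obtain ⟨ν, hνd, hνm, hνf, hνz⟩ :=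
      exists_better_of_not_le_of_not_le hα.1.le hα.2 hf h1 h2 ha hb hcomp.1 hcomp.2
    exact hνz.not_ge (hmax ν hνd hνm fun lam hd hm => hνf.trans (hmin lam hd hm))
  exact ⟨hchain, fun lam hd hm hc => hchain.eq hα.1 h1 h2 hd hm hc⟩

/-- among the minimizers of `Σ λ(a) f(a)`, any one maximizing
`Σ λ(a) z(a)²` is chain-supported, hence equals `λ_x`. -/
theorem stmt15 (α : ℝ) (hα : α ∈ Set.Ioc (0 : ℝ) 1) (n : ℕ) (f : (Fin n → D3) → ℝ)
    (hf : AlphaBisub α n f) (x : Fin n → ℝ) (hx : x ∈ Box α n)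
    (mu : (Fin n → D3) → ℝ)
    (h1 : IsDist n mu) (h2 : HasMarginal α n mu x)
    (hmin : ∀ lam : (Fin n → D3) → ℝ, IsDist n lam → HasMarginal α n lam x →
      ∑ a : Fin n → D3, mu a * f a ≤ ∑ a : Fin n → D3, lam a * f a)
    (hmax : ∀ lam : (Fin n → D3) → ℝ, IsDist n lam → HasMarginal α n lam x →
      (∀ lam' : (Fin n → D3) → ℝ, IsDist n lam' → HasMarginal α n lam' x →
        ∑ a : Fin n → D3, lam a * f a ≤ ∑ a : Fin n → D3, lam' a * f a) →
      ∑ a : Fin n → D3, lam a * (zc a : ℝ) ^ 2 ≤ ∑ a : Fin n → D3, mu a * (zc a : ℝ) ^ 2) :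
    ChainSupp n mu ∧
    ∀ lam : (Fin n → D3) → ℝ, IsDist n lam → HasMarginal α n lam x → ChainSupp n lam →
      mu = lam :=
  stmt15_general α hα n f hf x mu h1 h2 hmin hmax
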